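/- arXiv:1610.07077 — 3 statements merged into one kernel-verified Lean document; each statement's English description precedes it below -/
import Mathlib

section
/- Let A ∈ SL₂(ℤ) be hyperbolic, i.e. (trace A)² > 4. Then there exist B ∈ SL₂(ℤ), a sign ε ∈ {1, −1}, and a nonempty finite list (n₁, m₁), …, (n_k, m_k) of pairs of positive integers such that B·A·B⁻¹ = ε · (Uⁿ¹·Vᵐ¹ ⋯ Uⁿᵏ·Vᵐᵏ), where U = [[1,0],[1,1]] and V = [[1,1],[0,1]]. (Every hyperbolic element of PSL₂(ℤ) is conjugate to a reduced UV-word.) -/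
/-- The matrix `U = [[1,0],[1,1]]` as an element of `SL₂(ℤ)`. -/
def matU : Matrix.SpecialLinearGroup (Fin 2) ℤ :=
  ⟨!![1, 0; 1, 1], by norm_num [Matrix.det_fin_two_of]⟩

/-- The matrix `V = [[1,1],[0,1]]` as an element of `SL₂(ℤ)`. -/
def matV : Matrix.SpecialLinearGroup (Fin 2) ℤ :=
  ⟨!![1, 1; 0, 1], by norm_num [Matrix.det_fin_two_of]⟩

namespace UVaux

abbrev SL2 := Matrix.SpecialLinearGroup (Fin 2) ℤ

def mk2 (a b c d : ℤ) (h : a * d - b * c = 1) : SL2 :=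
  ⟨!![a, b; c, d], by rw [Matrix.det_fin_two_of]; exact h⟩

@[simp] lemma mk2_coe (a b c d : ℤ) (h : a * d - b * c = 1) :
    ((mk2 a b c d h : SL2) : Matrix (Fin 2) (Fin 2) ℤ) = !![a, b; c, d] := rfl

lemma entries_of (A : SL2) (a b c d : ℤ)
    (h : (A : Matrix (Fin 2) (Fin 2) ℤ) = !![a, b; c, d]) : a * d - b * c = 1 := by
  have h2 := A.2
  rw [h, Matrix.det_fin_two_of] at h2
  exact h2

lemma conj_coe (B A : SL2) :
    ((B * A * B⁻¹ : SL2) : Matrix (Fin 2) (Fin 2) ℤ)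
      = (B : Matrix (Fin 2) (Fin 2) ℤ) * (A : Matrix (Fin 2) (Fin 2) ℤ)
        * Matrix.adjugate (B : Matrix (Fin 2) (Fin 2) ℤ) := by
  simp [Matrix.SpecialLinearGroup.coe_mul, Matrix.SpecialLinearGroup.coe_inv]

def matS : SL2 := mk2 0 (-1) 1 0 (by ring)

def matVz (n : ℤ) : SL2 := mk2 1 n 0 1 (by ring)

lemma conj_S (A : SL2) (a b c d : ℤ)
    (hA : (A : Matrix (Fin 2) (Fin 2) ℤ) = !![a, b; c, d]) :
    ((matS * A * matS⁻¹ : SL2) : Matrix (Fin 2) (Fin 2) ℤ) = !![d, -c; -b, a] := by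
  rw [conj_coe, hA]
  show (!![0,-1;1,0] : Matrix (Fin 2) (Fin 2) ℤ) * _ * Matrix.adjugate !![(0:ℤ),-1;1,0] = _
  rw [Matrix.adjugate_fin_two_of]
  ext i j
  fin_cases i <;> fin_cases j <;>
    simp [Matrix.mul_apply, Fin.sum_univ_two] <;> ring

lemma conj_V (n : ℤ) (A : SL2) (a b c d : ℤ)
    (hA : (A : Matrix (Fin 2) (Fin 2) ℤ) = !![a, b; c, d]) :
    ((matVz n * A * (matVz n)⁻¹ : SL2) : Matrix (Fin 2) (Fin 2) ℤ)
      = !![a + n*c, b + n*(d-a) - n^2*c; c, d - n*c] := by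
  rw [conj_coe, hA]
  show (!![1,n;0,1] : Matrix (Fin 2) (Fin 2) ℤ) * _ * Matrix.adjugate !![(1:ℤ),n;0,1] = _
  rw [Matrix.adjugate_fin_two_of]
  ext i j
  fin_cases i <;> fin_cases j <;>
    simp [Matrix.mul_apply, Fin.sum_univ_two] <;> ring

def PosMat (A : SL2) : Prop :=
  0 < (A : Matrix (Fin 2) (Fin 2) ℤ) 0 0 ∧ 0 < (A : Matrix (Fin 2) (Fin 2) ℤ) 0 1 ∧
  0 < (A : Matrix (Fin 2) (Fin 2) ℤ) 1 0 ∧ 0 < (A : Matrix (Fin 2) (Fin 2) ℤ) 1 1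

def Good (A : SL2) : Prop := ∃ B : SL2, PosMat (B * A * B⁻¹)

lemma good_of_conj (C A : SL2) (h : Good (C * A * C⁻¹)) : Good A := by
  obtain ⟨B, hB⟩ := h
  refine ⟨B * C, ?_⟩
  have : (B * C) * A * (B * C)⁻¹ = B * (C * A * C⁻¹) * B⁻¹ := by group
  rw [this]; exact hB

lemma posmat_of (A : SL2) (a b c d : ℤ)
    (h : (A : Matrix (Fin 2) (Fin 2) ℤ) = !![a, b; c, d])
    (ha : 0 < a) (hb : 0 < b) (hc : 0 < c) (hd : 0 < d) : PosMat A := by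
  refine ⟨?_, ?_, ?_, ?_⟩ <;> rw [h] <;> simpa

lemma q1 (p e q : ℤ) (hp : 0 < p) :
    ∃ n : ℤ, 4*p*(p*n^2 + e*n + q) ≤ p^2 - (e^2 - 4*p*q) := by
  refine ⟨(p - e) / (2*p), ?_⟩
  set n := (p - e) / (2*p) with hn
  have h2p : 0 < 2*p := by linarith
  have h1 : 0 ≤ (p - e) % (2*p) := Int.emod_nonneg _ (by positivity)
  have h2 : (p - e) % (2*p) < 2*p := Int.emod_lt_of_pos _ h2p
  have key : (p - e) % (2*p) = (p - e) - 2*p * n := by rw [hn, Int.emod_def]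
  have hbound : -p < 2*p*n + e ∧ 2*p*n + e ≤ p := by constructor <;> linarith
  have hsq : (2*p*n + e)^2 ≤ p^2 := by nlinarith [hbound.1, hbound.2]
  nlinarith [hsq]

lemma diag_pos (x y : ℤ) (h1 : 0 < x*y) (h2 : 3 ≤ x + y) : 0 < x ∧ 0 < y := by
  rcases le_or_gt x 0 with hx | hx
  · exfalso
    rcases le_or_gt y 0 with hy | hy
    · linarith
    · nlinarith
  · refine ⟨hx, ?_⟩
    rcases le_or_gt y 0 with hy | hy
    · nlinarith
    · exact hy

lemma bound_lt (p x D : ℤ) (hq : 4*p*x ≤ p^2 - D) (hD5 : 5 ≤ D) (hp : 0 < p)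
    (hx : 0 < x) : x < p := by
  nlinarith [mul_pos hp hp, mul_pos hp hx]

lemma descent (N : ℕ) : ∀ A : SL2,
    3 ≤ (A : Matrix (Fin 2) (Fin 2) ℤ) 0 0 + (A : Matrix (Fin 2) (Fin 2) ℤ) 1 1 →
    (min |(A : Matrix (Fin 2) (Fin 2) ℤ) 0 1| |(A : Matrix (Fin 2) (Fin 2) ℤ) 1 0|).toNat ≤ N →
    Good A := by
  induction N using Nat.strong_induction_on with
  | _ N IH =>
  intro A htr hmin
  obtain ⟨a, b, c, d, hA⟩ : ∃ a b c d, (A : Matrix (Fin 2) (Fin 2) ℤ) = !![a,b;c,d] :=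
    ⟨_, _, _, _, Matrix.eta_fin_two _⟩
  have hdet := entries_of A a b c d hA
  rw [hA] at htr hmin
  replace htr : 3 ≤ a + d := htr
  replace hmin : (min |b| |c|).toNat ≤ N := hmin
  -- b, c nonzero
  have hb0 : b ≠ 0 := by
    intro h; subst h
    have had : a * d = 1 := by linarith
    rcases Int.eq_one_or_neg_one_of_mul_eq_one' had with ⟨rfl, rfl⟩ | ⟨rfl, rfl⟩ <;> omega
  have hc0 : c ≠ 0 := by
    intro h; subst h
    have had : a * d = 1 := by linarith
    rcases Int.eq_one_or_neg_one_of_mul_eq_one' had with ⟨rfl, rfl⟩ | ⟨rfl, rfl⟩ <;> omega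
  rcases lt_trichotomy (b*c) 0 with hbc | hbc | hbc
  rotate_left
  · exact absurd hbc (by simp [hb0, hc0])
  · -- b*c > 0 : same sign
    rcases lt_or_gt_of_ne hb0 with hb | hb
    · -- b < 0, so c < 0
      have hc : c < 0 := by nlinarith
      have ha : 0 < a := by nlinarith
      have hd : 0 < d := by nlinarith
      exact ⟨matS, posmat_of _ d (-c) (-b) a (conj_S A a b c d hA) hd (by linarith) (by linarith) ha⟩
    · have hc : 0 < c := by nlinarith
      have ha : 0 < a := by nlinarith
      have hd : 0 < d := by nlinarith
      exact ⟨1, by simpa using posmat_of A a b c d hA ha hb hc hd⟩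
  · -- core case b*c < 0
    obtain ⟨C₀, a₀, b₀, c₀, d₀, hA0, htr0, hbc0, hsz, hmin0⟩ :
        ∃ (C₀ : SL2) (a₀ b₀ c₀ d₀ : ℤ),
          ((C₀ * A * C₀⁻¹ : SL2) : Matrix (Fin 2) (Fin 2) ℤ) = !![a₀,b₀;c₀,d₀] ∧
          a₀ + d₀ = a + d ∧ b₀ * c₀ < 0 ∧ |c₀| ≤ |b₀| ∧ min |b₀| |c₀| = min |b| |c| := by
      rcases le_or_gt |c| |b| with h | h
      · refine ⟨1, a, b, c, d, ?_, rfl, hbc, h, rfl⟩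
        rw [one_mul, inv_one, mul_one]; exact hA
      · refine ⟨matS, d, -c, -b, a, conj_S A a b c d hA, by ring, by nlinarith, ?_, ?_⟩
        · rw [abs_neg, abs_neg]; exact le_of_lt h
        · rw [abs_neg, abs_neg, min_comm]
    obtain ⟨A', hA'def⟩ : ∃ X : SL2, X = C₀ * A * C₀⁻¹ := ⟨_, rfl⟩
    rw [← hA'def] at hA0
    have hdet0 : a₀ * d₀ - b₀ * c₀ = 1 := entries_of A' a₀ b₀ c₀ d₀ hA0
    have hD : (a₀ - d₀)^2 + 4*(b₀*c₀) = (a+d)^2 - 4 := by nlinarith [htr0, hdet0]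
    have hD5 : 5 ≤ (a+d)^2 - 4 := by nlinarith
    have hc00 : c₀ ≠ 0 := by intro h; rw [h] at hbc0; simp at hbc0
    have hmin_c : min |b₀| |c₀| = |c₀| := min_eq_right hsz
    rcases lt_or_gt_of_ne hc00 with hcneg | hcpos
    · -- c₀ < 0, b₀ > 0
      have hbpos : 0 < b₀ := by
        by_contra h
        push_neg at h
        have := mul_nonneg_of_nonpos_of_nonpos h (le_of_lt hcneg)
        linarith
      obtain ⟨n, hn⟩ := q1 (-c₀) (d₀ - a₀) b₀ (by linarith)
      obtain ⟨b', hb'⟩ : ∃ x : ℤ, x = b₀ + n*(d₀-a₀) - n^2*c₀ := ⟨_, rfl⟩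
      have hM := conj_V n A' a₀ b₀ c₀ d₀ hA0
      rw [show b₀ + n*(d₀-a₀) - n^2*c₀ = b' from hb'.symm] at hM
      obtain ⟨A'', hA''def⟩ : ∃ X : SL2, X = matVz n * A' * (matVz n)⁻¹ := ⟨_, rfl⟩
      rw [← hA''def] at hM
      have hdet'' : (a₀ + n*c₀) * (d₀ - n*c₀) - b' * c₀ = 1 :=
        entries_of A'' _ _ _ _ hM
      have htr'' : (a₀ + n*c₀) + (d₀ - n*c₀) = a + d := by linarith [htr0]
      have hq : 4*(-c₀)*b' ≤ c₀^2 - ((a+d)^2 - 4) := by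
        have e1 : 4*(-c₀)*((-c₀)*n^2 + (d₀-a₀)*n + b₀) = 4*(-c₀)*b' := by rw [hb']; ring
        have e2 : (-c₀)^2 - ((d₀-a₀)^2 - 4*(-c₀)*b₀) = c₀^2 - ((a+d)^2 - 4) := by
          linear_combination -hD
        linarith [hn, e1, e2]
      have hb'0 : b' ≠ 0 := by
        intro h
        rw [h] at hdet''
        have h1 : (a₀ + n*c₀) * (d₀ - n*c₀) = 1 := by linarith
        rcases Int.eq_one_or_neg_one_of_mul_eq_one' h1 with ⟨h2, h3⟩ | ⟨h2, h3⟩ <;> omega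
      rcases lt_or_gt_of_ne hb'0 with hb'neg | hb'pos
      · -- success: b' < 0 and c₀ < 0 : conjugate by S
        have hbc'' : 0 < b' * c₀ := mul_pos_of_neg_of_neg hb'neg hcneg
        obtain ⟨ha'', hd''⟩ := diag_pos (a₀ + n*c₀) (d₀ - n*c₀)
          (by linarith [hdet'', hbc'']) (by linarith [htr'', htr])
        apply good_of_conj C₀
        rw [← hA'def]
        apply good_of_conj (matVz n)
        rw [← hA''def]
        exact ⟨matS, posmat_of _ _ _ _ _ (conj_S A'' _ _ _ _ hM) hd''
          (by linarith) (by linarith) ha''⟩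
      · -- recurse: 0 < b' < -c₀
        have hlt : b' < -c₀ := by
          refine bound_lt (-c₀) b' ((a+d)^2 - 4) ?_ hD5 (by linarith) hb'pos
          calc 4*(-c₀)*b' ≤ c₀^2 - ((a+d)^2 - 4) := hq
            _ = (-c₀)^2 - ((a+d)^2 - 4) := by ring
        have h1 : min |b'| |c₀| < min |b| |c| := by
          rw [← hmin0, hmin_c]
          calc min |b'| |c₀| ≤ |b'| := min_le_left _ _
            _ < |c₀| := by rw [abs_of_pos hb'pos, abs_of_neg hcneg]; exact hlt
        have hN : (min |b'| |c₀|).toNat < N := by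
          have h2 : (0:ℤ) ≤ min |b'| |c₀| := le_min (abs_nonneg _) (abs_nonneg _)
          have h3 := hmin
          revert h1 h2 h3
          generalize min |b'| |c₀| = x
          generalize min |b| |c| = y
          intro h1 h2 h3
          omega
        have htrA'' : 3 ≤ (A'' : Matrix (Fin 2) (Fin 2) ℤ) 0 0
            + (A'' : Matrix (Fin 2) (Fin 2) ℤ) 1 1 := by
          rw [hM]
          show 3 ≤ (a₀ + n*c₀) + (d₀ - n*c₀)
          linarith [htr'']
        have hminA'' : (min |(A'' : Matrix (Fin 2) (Fin 2) ℤ) 0 1|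
            |(A'' : Matrix (Fin 2) (Fin 2) ℤ) 1 0|).toNat ≤ (min |b'| |c₀|).toNat := by
          rw [hM]
          exact le_rfl
        apply good_of_conj C₀
        rw [← hA'def]
        apply good_of_conj (matVz n)
        rw [← hA''def]
        exact IH _ hN A'' htrA'' hminA''
    · -- c₀ > 0, b₀ < 0
      have hbneg : b₀ < 0 := by
        by_contra h
        push_neg at h
        have := mul_nonneg h (le_of_lt hcpos)
        linarith
      obtain ⟨n, hn⟩ := q1 c₀ (a₀ - d₀) (-b₀) (by linarith)
      obtain ⟨b', hb'⟩ : ∃ x : ℤ, x = b₀ + n*(d₀-a₀) - n^2*c₀ := ⟨_, rfl⟩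
      have hM := conj_V n A' a₀ b₀ c₀ d₀ hA0
      rw [show b₀ + n*(d₀-a₀) - n^2*c₀ = b' from hb'.symm] at hM
      obtain ⟨A'', hA''def⟩ : ∃ X : SL2, X = matVz n * A' * (matVz n)⁻¹ := ⟨_, rfl⟩
      rw [← hA''def] at hM
      have hdet'' : (a₀ + n*c₀) * (d₀ - n*c₀) - b' * c₀ = 1 :=
        entries_of A'' _ _ _ _ hM
      have htr'' : (a₀ + n*c₀) + (d₀ - n*c₀) = a + d := by linarith [htr0]
      have hq : 4*c₀*(-b') ≤ c₀^2 - ((a+d)^2 - 4) := by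
        have e1 : 4*c₀*(c₀*n^2 + (a₀-d₀)*n + (-b₀)) = 4*c₀*(-b') := by rw [hb']; ring
        have e2 : c₀^2 - ((a₀-d₀)^2 - 4*c₀*(-b₀)) = c₀^2 - ((a+d)^2 - 4) := by
          linear_combination -hD
        linarith [hn, e1, e2]
      have hb'0 : b' ≠ 0 := by
        intro h
        rw [h] at hdet''
        have h1 : (a₀ + n*c₀) * (d₀ - n*c₀) = 1 := by linarith
        rcases Int.eq_one_or_neg_one_of_mul_eq_one' h1 with ⟨h2, h3⟩ | ⟨h2, h3⟩ <;> omega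
      rcases lt_or_gt_of_ne hb'0 with hb'neg | hb'pos
      · -- recurse: b' < 0, -b' < c₀
        have hlt : -b' < c₀ := bound_lt c₀ (-b') ((a+d)^2 - 4) hq hD5 hcpos (by linarith)
        have h1 : min |b'| |c₀| < min |b| |c| := by
          rw [← hmin0, hmin_c]
          calc min |b'| |c₀| ≤ |b'| := min_le_left _ _
            _ < |c₀| := by rw [abs_of_neg hb'neg, abs_of_pos hcpos]; exact hlt
        have hN : (min |b'| |c₀|).toNat < N := by
          have h2 : (0:ℤ) ≤ min |b'| |c₀| := le_min (abs_nonneg _) (abs_nonneg _)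
          have h3 := hmin
          revert h1 h2 h3
          generalize min |b'| |c₀| = x
          generalize min |b| |c| = y
          intro h1 h2 h3
          omega
        have htrA'' : 3 ≤ (A'' : Matrix (Fin 2) (Fin 2) ℤ) 0 0
            + (A'' : Matrix (Fin 2) (Fin 2) ℤ) 1 1 := by
          rw [hM]
          show 3 ≤ (a₀ + n*c₀) + (d₀ - n*c₀)
          linarith [htr'']
        have hminA'' : (min |(A'' : Matrix (Fin 2) (Fin 2) ℤ) 0 1|
            |(A'' : Matrix (Fin 2) (Fin 2) ℤ) 1 0|).toNat ≤ (min |b'| |c₀|).toNat := by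
          rw [hM]
          exact le_rfl
        apply good_of_conj C₀
        rw [← hA'def]
        apply good_of_conj (matVz n)
        rw [← hA''def]
        exact IH _ hN A'' htrA'' hminA''
      · -- success: b' > 0 and c₀ > 0
        have hbc'' : 0 < b' * c₀ := mul_pos hb'pos hcpos
        obtain ⟨ha'', hd''⟩ := diag_pos (a₀ + n*c₀) (d₀ - n*c₀)
          (by linarith [hdet'', hbc'']) (by linarith [htr'', htr])
        apply good_of_conj C₀
        rw [← hA'def]
        apply good_of_conj (matVz n)
        rw [← hA''def]
        exact ⟨1, by simpa using posmat_of A'' _ _ _ _ hM ha'' hb'pos hcpos hd''⟩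

def letter (x : Bool) : SL2 := if x then matU else matV

@[simp] lemma letter_true : letter true = matU := rfl
@[simp] lemma letter_false : letter false = matV := rfl

def wordProd (L : List Bool) : SL2 := (L.map letter).prod

def blockProd (W : List (ℕ × ℕ)) : SL2 := (W.map fun p => matU ^ p.1 * matV ^ p.2).prod

@[simp] lemma wordProd_nil : wordProd [] = 1 := rfl

@[simp] lemma wordProd_cons (x : Bool) (L : List Bool) :
    wordProd (x :: L) = letter x * wordProd L := by simp [wordProd]

@[simp] lemma blockProd_nil : blockProd [] = 1 := rfl

@[simp] lemma blockProd_cons (p : ℕ × ℕ) (W : List (ℕ × ℕ)) :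
    blockProd (p :: W) = matU ^ p.1 * matV ^ p.2 * blockProd W := by simp [blockProd]

lemma blockProd_append (W₁ W₂ : List (ℕ × ℕ)) :
    blockProd (W₁ ++ W₂) = blockProd W₁ * blockProd W₂ := by simp [blockProd]

lemma coe_U_pow (k : ℕ) :
    ((matU ^ k : SL2) : Matrix (Fin 2) (Fin 2) ℤ) = !![1, 0; (k:ℤ), 1] := by
  induction k with
  | zero => simp [Matrix.SpecialLinearGroup.coe_one, Matrix.one_fin_two]
  | succ k ih =>
    rw [pow_succ, Matrix.SpecialLinearGroup.coe_mul, ih]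
    show _ * (!![1,0;1,1] : Matrix (Fin 2) (Fin 2) ℤ) = _
    ext i j
    fin_cases i <;> fin_cases j <;>
      simp [Matrix.mul_apply, Fin.sum_univ_two] <;> push_cast <;> ring

lemma coe_V_pow (k : ℕ) :
    ((matV ^ k : SL2) : Matrix (Fin 2) (Fin 2) ℤ) = !![1, (k:ℤ); 0, 1] := by
  induction k with
  | zero => simp [Matrix.SpecialLinearGroup.coe_one, Matrix.one_fin_two]
  | succ k ih =>
    rw [pow_succ, Matrix.SpecialLinearGroup.coe_mul, ih]
    show _ * (!![1,1;0,1] : Matrix (Fin 2) (Fin 2) ℤ) = _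
    ext i j
    fin_cases i <;> fin_cases j <;>
      simp [Matrix.mul_apply, Fin.sum_univ_two] <;> push_cast <;> ring

lemma wordProd_all_true (L : List Bool) (h : false ∉ L) :
    wordProd L = matU ^ L.length := by
  induction L with
  | nil => simp
  | cons x L ih =>
    have hx : x = true := by
      cases x
      · exact absurd (List.mem_cons_self) h
      · rfl
    subst hx
    rw [wordProd_cons, letter_true, ih (fun hf => h (List.mem_cons_of_mem _ hf)),
      List.length_cons, pow_succ']

lemma wordProd_all_false (L : List Bool) (h : true ∉ L) :
    wordProd L = matV ^ L.length := by
  induction L with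
  | nil => simp
  | cons x L ih =>
    have hx : x = false := by
      cases x
      · rfl
      · exact absurd (List.mem_cons_self) h
    subst hx
    rw [wordProd_cons, letter_false, ih (fun hf => h (List.mem_cons_of_mem _ hf)),
      List.length_cons, pow_succ']

lemma nonneg_word (N : ℕ) : ∀ A : SL2, ∀ a b c d : ℤ,
    (A : Matrix (Fin 2) (Fin 2) ℤ) = !![a, b; c, d] →
    0 ≤ a → 0 ≤ b → 0 ≤ c → 0 ≤ d → (a + b + c + d).toNat ≤ N →
    ∃ L : List Bool, A = wordProd L := by
  induction N using Nat.strong_induction_on with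
  | _ N IH =>
  intro A a b c d hA ha hb hc hd hN
  have hdet := entries_of A a b c d hA
  by_cases hI : a = 1 ∧ b = 0 ∧ c = 0 ∧ d = 1
  · obtain ⟨rfl, rfl, rfl, rfl⟩ := hI
    refine ⟨[], ?_⟩
    apply Subtype.ext
    rw [hA]
    show _ = ((1 : SL2) : Matrix (Fin 2) (Fin 2) ℤ)
    rw [Matrix.SpecialLinearGroup.coe_one, Matrix.one_fin_two]
  · have hcase : (c ≤ a ∧ d ≤ b) ∨ (a ≤ c ∧ b ≤ d) := by
      rcases le_or_gt a c with h1 | h1 <;> rcases le_or_gt b d with h2 | h2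
      · right; exact ⟨h1, h2⟩
      · -- a ≤ c, d < b : if a < c impossible, else a = c
        rcases eq_or_lt_of_le h1 with rfl | h1'
        · left; exact ⟨le_refl _, le_of_lt h2⟩
        · exfalso; nlinarith
      · -- c < a, b ≤ d : if b < d impossible unless identity
        rcases eq_or_lt_of_le h2 with rfl | h2'
        · left; exact ⟨le_of_lt h1, le_refl _⟩
        · exfalso
          have hb0 : b = 0 := by nlinarith
          have hc0 : c = 0 := by nlinarith
          subst hb0; subst hc0
          have had : a * d = 1 := by linarith
          rcases Int.eq_one_or_neg_one_of_mul_eq_one' had with ⟨h3, h4⟩ | ⟨h3, h4⟩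
          · exact hI ⟨h3, rfl, rfl, h4⟩
          · omega
      · left; exact ⟨le_of_lt h1, le_of_lt h2⟩
    rcases hcase with ⟨h1, h2⟩ | ⟨h1, h2⟩
    · -- row1 ≥ row2 : A = matV * A'
      have hcd : 1 ≤ c + d := by
        rcases le_or_gt (c + d) 0 with h | h
        · exfalso
          have hc0 : c = 0 := by omega
          have hd0 : d = 0 := by omega
          rw [hc0, hd0] at hdet
          simp at hdet
        · omega
      have hdet' : (a - c) * d - (b - d) * c = 1 := by linear_combination hdet
      obtain ⟨L', hL'⟩ := IH (N - 1) (by omega) (mk2 (a-c) (b-d) c d hdet') (a-c) (b-d) c d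
        rfl (by linarith) (by linarith) hc hd (by omega)
      refine ⟨false :: L', ?_⟩
      rw [wordProd_cons, letter_false, ← hL']
      apply Subtype.ext
      rw [Matrix.SpecialLinearGroup.coe_mul, hA]
      show _ = (!![1,1;0,1] : Matrix (Fin 2) (Fin 2) ℤ) * !![a-c, b-d; c, d]
      ext i j
      fin_cases i <;> fin_cases j <;>
        simp [Matrix.mul_apply, Fin.sum_univ_two] <;> ring
    · -- row2 ≥ row1 : A = matU * A'
      have hab : 1 ≤ a + b := by
        rcases le_or_gt (a + b) 0 with h | h
        · exfalso
          have ha0 : a = 0 := by omega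
          have hb0 : b = 0 := by omega
          rw [ha0, hb0] at hdet
          simp at hdet
        · omega
      have hdet' : a * (d - b) - b * (c - a) = 1 := by linear_combination hdet
      obtain ⟨L', hL'⟩ := IH (N - 1) (by omega) (mk2 a b (c-a) (d-b) hdet') a b (c-a) (d-b)
        rfl ha hb (by linarith) (by linarith) (by omega)
      refine ⟨true :: L', ?_⟩
      rw [wordProd_cons, letter_true, ← hL']
      apply Subtype.ext
      rw [Matrix.SpecialLinearGroup.coe_mul, hA]
      show _ = (!![1,0;1,1] : Matrix (Fin 2) (Fin 2) ℤ) * !![a, b; c-a, d-b]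
      ext i j
      fin_cases i <;> fin_cases j <;>
        simp [Matrix.mul_apply, Fin.sum_univ_two] <;> ring

lemma gen (L : List Bool) : ∃ (m₀ n₁ : ℕ) (W : List (ℕ × ℕ)),
    (∀ p ∈ W, 0 < p.1 ∧ 0 < p.2) ∧
    wordProd L = matV ^ m₀ * blockProd W * matU ^ n₁ ∧
    (W = [] → m₀ = 0 → false ∉ L) ∧ (W = [] → n₁ = 0 → true ∉ L) := by
  induction L with
  | nil => exact ⟨0, 0, [], by simp, by simp, by simp, by simp⟩
  | cons x L ih =>
    obtain ⟨m₀, n₁, W, hW, hP, h1, h2⟩ := ih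
    cases x with
    | false =>
      refine ⟨m₀ + 1, n₁, W, hW, ?_, ?_, ?_⟩
      · rw [wordProd_cons, letter_false, hP, pow_succ']
        simp [mul_assoc]
      · intro _ h; omega
      · intro hw hn
        simp [h2 hw hn]
    | true =>
      cases hm : m₀ with
      | zero =>
        subst hm
        cases W with
        | nil =>
          refine ⟨0, n₁ + 1, [], by simp, ?_, ?_, ?_⟩
          · rw [wordProd_cons, letter_true, hP]
            simp [pow_succ', pow_zero]
          · intro _ _
            simp [h1 rfl rfl]
          · intro _ h; omega
        | cons p W' =>
          refine ⟨0, n₁, (p.1 + 1, p.2) :: W', ?_, ?_, ?_, ?_⟩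
          · intro q hq
            rcases List.mem_cons.mp hq with rfl | hq'
            · exact ⟨Nat.succ_pos _, (hW p (List.mem_cons_self)).2⟩
            · exact hW q (List.mem_cons_of_mem _ hq')
          · rw [wordProd_cons, letter_true, hP]
            simp only [blockProd_cons, pow_zero, one_mul, pow_succ']
            group
          · intro h; simp at h
          · intro h; simp at h
      | succ m' =>
        subst hm
        refine ⟨0, n₁, (1, m' + 1) :: W, ?_, ?_, ?_, ?_⟩
        · intro q hq
          rcases List.mem_cons.mp hq with rfl | hq'
          · exact ⟨Nat.one_pos, Nat.succ_pos _⟩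
          · exact hW q hq'
        · rw [wordProd_cons, letter_true, hP]
          simp only [blockProd_cons, pow_zero, one_mul, pow_one]
          group
        · intro h; simp at h
        · intro h; simp at h

lemma to_blocks (A : SL2) (h : PosMat A) :
    ∃ (B : SL2) (W : List (ℕ × ℕ)), W ≠ [] ∧ (∀ p ∈ W, 0 < p.1 ∧ 0 < p.2) ∧
      B * A * B⁻¹ = blockProd W := by
  obtain ⟨ha, hb, hc, hd⟩ := h
  obtain ⟨L, hL⟩ := nonneg_word ((A : Matrix (Fin 2) (Fin 2) ℤ) 0 0
      + (A : Matrix (Fin 2) (Fin 2) ℤ) 0 1 + (A : Matrix (Fin 2) (Fin 2) ℤ) 1 0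
      + (A : Matrix (Fin 2) (Fin 2) ℤ) 1 1).toNat A
    ((A : Matrix (Fin 2) (Fin 2) ℤ) 0 0) ((A : Matrix (Fin 2) (Fin 2) ℤ) 0 1)
    ((A : Matrix (Fin 2) (Fin 2) ℤ) 1 0) ((A : Matrix (Fin 2) (Fin 2) ℤ) 1 1)
    (Matrix.eta_fin_two _) (le_of_lt ha) (le_of_lt hb) (le_of_lt hc) (le_of_lt hd) le_rfl
  obtain ⟨m₀, n₁, W, hW, hP, h1, h2⟩ := gen L
  -- both letters occur in L
  have hfalse : false ∈ L := by
    by_contra hf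
    have := wordProd_all_true L hf
    rw [← hL] at this
    have h01 : (A : Matrix (Fin 2) (Fin 2) ℤ) 0 1 = 0 := by
      rw [this, coe_U_pow]
      rfl
    rw [h01] at hb
    exact lt_irrefl _ hb
  have htrue : true ∈ L := by
    by_contra hf
    have := wordProd_all_false L hf
    rw [← hL] at this
    have h10 : (A : Matrix (Fin 2) (Fin 2) ℤ) 1 0 = 0 := by
      rw [this, coe_V_pow]
      rfl
    rw [h10] at hc
    exact lt_irrefl _ hc
  rw [hP] at hL
  cases hm : m₀ with
  | zero =>
    subst hm
    have hWne : W ≠ [] := fun hw => (h1 hw rfl) hfalse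
    cases hn : n₁ with
    | zero =>
      subst hn
      refine ⟨1, W, hWne, hW, ?_⟩
      rw [hL]
      simp
    | succ t =>
      obtain ⟨p, W', rfl⟩ : ∃ p W', W = p :: W' := by
        cases W with
        | nil => exact absurd rfl hWne
        | cons p W' => exact ⟨p, W', rfl⟩
      refine ⟨matU ^ n₁, (p.1 + n₁, p.2) :: W', by simp, ?_, ?_⟩
      · intro q hq
        rcases List.mem_cons.mp hq with rfl | hq'
        · exact ⟨by omega, (hW p (List.mem_cons_self)).2⟩
        · exact hW q (List.mem_cons_of_mem _ hq')
      · rw [hL]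
        simp only [blockProd_cons, pow_zero, one_mul, pow_add]
        group
  | succ s =>
    subst hm
    cases hn : n₁ with
    | zero =>
      subst hn
      have hWne : W ≠ [] := fun hw => (h2 hw rfl) htrue
      obtain ⟨W'', q, rfl⟩ : ∃ W'' q, W = W'' ++ [q] := by
        rcases List.eq_nil_or_concat W with rfl | ⟨W'', q, rfl⟩
        · exact absurd rfl hWne
        · exact ⟨W'', q, by simp⟩
      refine ⟨(matV ^ (s+1))⁻¹, W'' ++ [(q.1, q.2 + (s+1))], by simp, ?_, ?_⟩
      · intro r hr
        rcases List.mem_append.mp hr with hr' | hr'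
        · exact hW r (List.mem_append.mpr (Or.inl hr'))
        · simp at hr'
          subst hr'
          have := hW q (List.mem_append.mpr (Or.inr (List.mem_singleton_self _)))
          exact ⟨this.1, by omega⟩
      · rw [hL]
        rw [blockProd_append, blockProd_append]
        simp only [blockProd_cons, blockProd_nil, pow_zero, mul_one, pow_add]
        group
    | succ t =>
      refine ⟨(matV ^ (s+1))⁻¹, W ++ [(n₁, s+1)], by simp, ?_, ?_⟩
      · intro r hr
        rcases List.mem_append.mp hr with hr' | hr'
        · exact hW r hr'
        · simp at hr'
          subst hr'
          exact ⟨by omega, by omega⟩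
      · rw [hL]
        rw [blockProd_append]
        simp only [blockProd_cons, blockProd_nil, mul_one]
        group

lemma main_pos (A : SL2)
    (htr : 3 ≤ (A : Matrix (Fin 2) (Fin 2) ℤ) 0 0 + (A : Matrix (Fin 2) (Fin 2) ℤ) 1 1) :
    ∃ (B : SL2) (W : List (ℕ × ℕ)), W ≠ [] ∧ (∀ p ∈ W, 0 < p.1 ∧ 0 < p.2) ∧
      B * A * B⁻¹ = blockProd W := by
  obtain ⟨B₁, hB₁⟩ := descent _ A htr le_rfl
  obtain ⟨B₂, W, hne, hpos, hEq⟩ := to_blocks _ hB₁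
  refine ⟨B₂ * B₁, W, hne, hpos, ?_⟩
  rw [← hEq]
  group

lemma blockProd_ofFn (W : List (ℕ × ℕ)) :
    (List.ofFn fun i : Fin W.length => matU ^ (W.get i).1 * matV ^ (W.get i).2).prod
      = blockProd W := by
  have : (List.ofFn fun i : Fin W.length => matU ^ (W.get i).1 * matV ^ (W.get i).2)
      = W.map fun p => matU ^ p.1 * matV ^ p.2 := by
    conv_rhs => rw [← List.ofFn_get W, List.map_ofFn]
    rfl
  rw [this, blockProd]

end UVaux

/-- **Lemma 1.8 of the paper.** Every hyperbolic element of
`SL₂(ℤ)` is, up to sign, conjugate to a reduced `UV`-word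
`Uⁿ¹Vᵐ¹⋯UⁿᵏVᵐᵏ` with `k > 0` and all `nᵢ, mᵢ > 0`. -/
theorem hyperbolic_conj_UV_word (A : Matrix.SpecialLinearGroup (Fin 2) ℤ)
    (hA : (Matrix.trace (A : Matrix (Fin 2) (Fin 2) ℤ)) ^ 2 > 4) :
    ∃ (B : Matrix.SpecialLinearGroup (Fin 2) ℤ) (ε : ℤ) (k : ℕ) (n m : Fin k → ℕ),
      0 < k ∧ (∀ i, 0 < n i) ∧ (∀ i, 0 < m i) ∧ (ε = 1 ∨ ε = -1) ∧
      ((B * A * B⁻¹ : Matrix.SpecialLinearGroup (Fin 2) ℤ) : Matrix (Fin 2) (Fin 2) ℤ) =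
        ε • (((List.ofFn fun i => matU ^ n i * matV ^ m i).prod :
          Matrix.SpecialLinearGroup (Fin 2) ℤ) : Matrix (Fin 2) (Fin 2) ℤ) := by
  rw [Matrix.trace_fin_two] at hA
  have htri : (A : Matrix (Fin 2) (Fin 2) ℤ) 0 0 + (A : Matrix (Fin 2) (Fin 2) ℤ) 1 1 ≤ -3
      ∨ 3 ≤ (A : Matrix (Fin 2) (Fin 2) ℤ) 0 0 + (A : Matrix (Fin 2) (Fin 2) ℤ) 1 1 := by
    set t := (A : Matrix (Fin 2) (Fin 2) ℤ) 0 0 + (A : Matrix (Fin 2) (Fin 2) ℤ) 1 1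
    by_contra h
    push_neg at h
    obtain ⟨h1, h2⟩ := h
    nlinarith
  rcases htri with hneg | hpos
  · -- negative trace: use -A
    have hdetneg : ((-(A : Matrix (Fin 2) (Fin 2) ℤ)) : Matrix (Fin 2) (Fin 2) ℤ).det = 1 := by
      rw [Matrix.det_neg]
      simp [A.2]
    set negA : UVaux.SL2 := ⟨-(A : Matrix (Fin 2) (Fin 2) ℤ), hdetneg⟩ with hnegA
    have htrneg : 3 ≤ (negA : Matrix (Fin 2) (Fin 2) ℤ) 0 0
        + (negA : Matrix (Fin 2) (Fin 2) ℤ) 1 1 := by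
      show 3 ≤ (-(A : Matrix (Fin 2) (Fin 2) ℤ)) 0 0 + (-(A : Matrix (Fin 2) (Fin 2) ℤ)) 1 1
      simp only [Matrix.neg_apply]
      linarith
    obtain ⟨B, W, hne, hposW, hEq⟩ := UVaux.main_pos negA htrneg
    refine ⟨B, -1, W.length, fun i => (W.get i).1, fun i => (W.get i).2,
      List.length_pos_iff.mpr hne, fun i => (hposW _ (W.get_mem _)).1,
      fun i => (hposW _ (W.get_mem _)).2, Or.inr rfl, ?_⟩
    rw [UVaux.blockProd_ofFn W, ← hEq]
    have h1 : ((B * A * B⁻¹ : UVaux.SL2) : Matrix (Fin 2) (Fin 2) ℤ)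
        = (B : Matrix (Fin 2) (Fin 2) ℤ) * (A : Matrix (Fin 2) (Fin 2) ℤ)
          * ((B⁻¹ : UVaux.SL2) : Matrix (Fin 2) (Fin 2) ℤ) := by
      simp [Matrix.SpecialLinearGroup.coe_mul]
    have h2 : ((B * negA * B⁻¹ : UVaux.SL2) : Matrix (Fin 2) (Fin 2) ℤ)
        = (B : Matrix (Fin 2) (Fin 2) ℤ) * (-(A : Matrix (Fin 2) (Fin 2) ℤ))
          * ((B⁻¹ : UVaux.SL2) : Matrix (Fin 2) (Fin 2) ℤ) := by
      rw [Matrix.SpecialLinearGroup.coe_mul, Matrix.SpecialLinearGroup.coe_mul]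
    rw [h1, h2]
    simp [neg_mul, mul_neg]
  · obtain ⟨B, W, hne, hposW, hEq⟩ := UVaux.main_pos A hpos
    refine ⟨B, 1, W.length, fun i => (W.get i).1, fun i => (W.get i).2,
      List.length_pos_iff.mpr hne, fun i => (hposW _ (W.get_mem _)).1,
      fun i => (hposW _ (W.get_mem _)).2, Or.inl rfl, ?_⟩
    rw [UVaux.blockProd_ofFn W, hEq, one_smul]
end

section
/- Let δ, η be nonzero complex numbers, and let a ≥ 1 and c ≥ 1 be integers. Set x = δ + δ⁻¹, y = η + η⁻¹, z = δη + δ⁻¹η⁻¹. Then δᵃηᶜ + δ⁻ᵃη⁻ᶜ = 2·T_a(x/2)·T_c(y/2) + (1/2)·U_{a−1}(x/2)·U_{c−1}(y/2)·(2z − xy), where T_n and U_n denote the Chebyshev polynomials of the first and second kinds. (This is the key identity giving the polynomials p_{a,c}(x,y) = 2T_a(x/2)T_c(y/2) − (xy/2)U_{a−1}(x/2)U_{c−1}(y/2) and q_{a,c}(x,y) = U_{a−1}(x/2)U_{c−1}(y/2) expressing the GL₂(ℤ)-action on the Cayley cubic.) -/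
/-!
Put `x = δ + δ⁻¹`. Over all of `ℤ`, the sequences `n ↦ δⁿ + δ⁻ⁿ` and `n ↦ δⁿ⁺¹ - δ⁻ⁿ⁻¹` satisfy
the recurrence `uₙ₊₁ = x uₙ - uₙ₋₁`, as do `2 Tₙ(x/2)` and `(δ - δ⁻¹) Uₙ(x/2)`; comparing initial
values gives `2 Tₙ(x/2) = δⁿ + δ⁻ⁿ` and `(δ - δ⁻¹) Uₙ₋₁(x/2) = δⁿ - δ⁻ⁿ`. Since
`2z - xy = (δ - δ⁻¹)(η - η⁻¹)`, the right-hand side is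
`½ ((δᵃ + δ⁻ᵃ)(ηᶜ + η⁻ᶜ) + (δᵃ - δ⁻ᵃ)(ηᶜ - η⁻ᶜ)) = δᵃηᶜ + δ⁻ᵃη⁻ᶜ`.
-/

open Polynomial Polynomial.Chebyshev

theorem Int.eq_of_three_term_recurrence {R : Type*} [Ring R] {f g : ℤ → R} (y : R)
    (hf : ∀ m, f (m + 1) = y * f m - f (m - 1)) (hg : ∀ m, g (m + 1) = y * g m - g (m - 1))
    (h0 : f 0 = g 0) (h1 : f 1 = g 1) : f = g := by
  suffices h : ∀ n, f n = g n ∧ f (n + 1) = g (n + 1) from funext fun n ↦ (h n).1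
  intro n
  induction n using Int.induction_on with
  | zero => exact ⟨h0, by simpa using h1⟩
  | succ n ih =>
    refine ⟨ih.2, ?_⟩
    rw [hf, hg, add_sub_cancel_right, ih.1, ih.2]
  | pred n ih =>
    refine ⟨?_, by rw [sub_add_cancel, ih.1]⟩
    have h := (hf (-n)).symm.trans (ih.2.trans (hg (-n)))
    rw [ih.1] at h
    exact sub_right_injective h

theorem zpow_add_one_add_zpow_sub_one {K : Type*} [Field K] {x : K} (hx : x ≠ 0) (m : ℤ) :
    x ^ (m + 1) + x ^ (m - 1) = (x + x⁻¹) * x ^ m := by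
  rw [zpow_add_one₀ hx, zpow_sub_one₀ hx]
  ring

namespace Polynomial.Chebyshev

variable {K : Type*} [Field K] {x : K}

theorem C_eval_add_inv (hx : x ≠ 0) (n : ℤ) : (C K n).eval (x + x⁻¹) = x ^ n + x⁻¹ ^ n := by
  revert n
  rw [← funext_iff]
  refine Int.eq_of_three_term_recurrence (x + x⁻¹) (fun m ↦ ?_) (fun m ↦ ?_) ?_ ?_
  · simp only [C_add_one, eval_sub, eval_mul, eval_X]
  · have rec_x := zpow_add_one_add_zpow_sub_one hx m
    have rec_inv := zpow_add_one_add_zpow_sub_one (inv_ne_zero hx) m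
    rw [inv_inv] at rec_inv
    linear_combination rec_x + rec_inv
  · norm_num
  · simp

theorem sub_inv_mul_S_eval_add_inv (hx : x ≠ 0) (n : ℤ) :
    (x - x⁻¹) * (S K n).eval (x + x⁻¹) = x ^ (n + 1) - x⁻¹ ^ (n + 1) := by
  revert n
  rw [← funext_iff]
  refine Int.eq_of_three_term_recurrence (x + x⁻¹) (fun m ↦ ?_) (fun m ↦ ?_) ?_ ?_
  · simp only [S_add_one, eval_sub, eval_mul, eval_X]
    ring
  · have rec_x := zpow_add_one_add_zpow_sub_one hx (m + 1)
    have rec_inv := zpow_add_one_add_zpow_sub_one (inv_ne_zero hx) (m + 1)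
    rw [inv_inv, add_sub_cancel_right] at rec_inv
    rw [add_sub_cancel_right] at rec_x
    rw [sub_add_cancel]
    linear_combination rec_x - rec_inv
  · simp
  · rw [S_one, eval_X, one_add_one_eq_two, zpow_two, zpow_two]
    ring

theorem two_mul_T_eval_half [NeZero (2 : K)] (n : ℤ) (y : K) :
    2 * (T K n).eval (y / 2) = (C K n).eval y := by
  simpa [mul_div_cancel₀ y (NeZero.ne (2 : K))] using
    (congrArg (eval (y / 2)) (C_comp_two_mul_X K n)).symm

theorem U_eval_half [NeZero (2 : K)] (n : ℤ) (y : K) :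
    (U K n).eval (y / 2) = (S K n).eval y := by
  simpa [mul_div_cancel₀ y (NeZero.ne (2 : K))] using
    (congrArg (eval (y / 2)) (S_comp_two_mul_X K n)).symm

end Polynomial.Chebyshev

theorem chebyshev_action_identity_general (δ η : ℂ) (hδ : δ ≠ 0) (hη : η ≠ 0)
    (a c : ℤ) :
    δ ^ a * η ^ c + δ ^ (-a) * η ^ (-c) =
      2 * (Chebyshev.T ℂ a).eval ((δ + δ⁻¹) / 2) *
          (Chebyshev.T ℂ c).eval ((η + η⁻¹) / 2) +
        1 / 2 * (Chebyshev.U ℂ (a - 1)).eval ((δ + δ⁻¹) / 2) *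
          (Chebyshev.U ℂ (c - 1)).eval ((η + η⁻¹) / 2) *
          (2 * (δ * η + δ⁻¹ * η⁻¹) - (δ + δ⁻¹) * (η + η⁻¹)) := by
  have Tδ := (two_mul_T_eval_half a _).trans (C_eval_add_inv hδ a)
  have Tη := (two_mul_T_eval_half c _).trans (C_eval_add_inv hη c)
  have Uδ := sub_inv_mul_S_eval_add_inv hδ (a - 1)
  have Uη := sub_inv_mul_S_eval_add_inv hη (c - 1)
  rw [← U_eval_half, sub_add_cancel] at Uδ Uη
  rw [← inv_zpow', ← inv_zpow']
  linear_combination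
    (-(1 / 2) : ℂ) * ((η ^ c + η⁻¹ ^ c) * Tδ + 2 * (T ℂ a).eval ((δ + δ⁻¹) / 2) * Tη) -
      (1 / 2 : ℂ) * ((η ^ c - η⁻¹ ^ c) * Uδ + (δ - δ⁻¹) * (U ℂ (a - 1)).eval ((δ + δ⁻¹) / 2) * Uη)

/-- For nonzero complex `δ, η` and integers `a, c ≥ 1`, with
`x = δ + δ⁻¹`, `y = η + η⁻¹`, `z = δη + δ⁻¹η⁻¹`, one has
`δᵃηᶜ + δ⁻ᵃη⁻ᶜ = 2 Tₐ(x/2) T_c(y/2) + ½ U_{a−1}(x/2) U_{c−1}(y/2) (2z − xy)`,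
where `T` and `U` are the Chebyshev polynomials of the first and second kinds. -/
theorem chebyshev_action_identity (δ η : ℂ) (hδ : δ ≠ 0) (hη : η ≠ 0)
    (a c : ℤ) (ha : 1 ≤ a) (hc : 1 ≤ c) :
    δ ^ a * η ^ c + δ ^ (-a) * η ^ (-c) =
      2 * (Chebyshev.T ℂ a).eval ((δ + δ⁻¹) / 2) *
          (Chebyshev.T ℂ c).eval ((η + η⁻¹) / 2) +
        1 / 2 * (Chebyshev.U ℂ (a - 1)).eval ((δ + δ⁻¹) / 2) *
          (Chebyshev.U ℂ (c - 1)).eval ((η + η⁻¹) / 2) *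
          (2 * (δ * η + δ⁻¹ * η⁻¹) - (δ + δ⁻¹) * (η + η⁻¹)) :=
  chebyshev_action_identity_general δ η hδ hη a c
end

section
/- Let (α₁, β₁), …, (α_t, β_t) be a nonempty list of pairs of positive integers, let w(A,B) = A^{α₁}B^{β₁}⋯A^{α_t}B^{β_t}, and let a = α₁ + ⋯ + α_t. Then there exists a polynomial P ∈ ℤ[x, y, z] such that every monomial xⁱyʲzᵏ occurring in P with nonzero coefficient satisfies i + k ≤ a, and such that for all A, B ∈ SL₂(ℂ): trace(w(A,B)) = P(trace A, trace B, trace(A·B)). -/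
/-!
By Cayley–Hamilton, for `A, B ∈ SL₂` the span of `1, A, B, AB` over `ℤ[x, y, z]`
(`x = tr A`, `y = tr B`, `z = tr AB`) is closed under left multiplication by `A` and by `B`:
`A² = xA - 1`, `BA = -AB + yA + xB + (z - xy)`, `B(AB) = A + zB - x`.
Left multiplication by `A` raises the `(x,z)`-degree of the coefficients by at most one, left
multiplication by `B` does not raise it, provided the coefficients of `A` and `AB` are counted with
one extra degree. Taking the trace (`tr 1 = 2`) gives the polynomial.
-/

open Matrix MvPolynomial

namespace MvPolynomial

variable {σ R : Type*} [CommSemiring R]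

variable (R) in
/-- Indexed by `ℤ` so that a negative bound forces the polynomial to vanish. -/
noncomputable def weightedDegreeLE (w : σ → ℕ) (n : ℤ) : Submodule R (MvPolynomial σ R) :=
  restrictSupport R {m | (Finsupp.weight w m : ℤ) ≤ n}

variable {w : σ → ℕ} {a b c : ℤ} {p q : MvPolynomial σ R}

theorem mem_weightedDegreeLE_iff :
    p ∈ weightedDegreeLE R w a ↔ ∀ m ∈ p.support, (Finsupp.weight w m : ℤ) ≤ a :=
  Iff.rfl

theorem weightedDegreeLE_mono (h : a ≤ b) : weightedDegreeLE R w a ≤ weightedDegreeLE R w b :=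
  restrictSupport_mono R fun _ hm => le_trans hm h

open scoped Pointwise in
theorem mul_mem_weightedDegreeLE (hp : p ∈ weightedDegreeLE R w a)
    (hq : q ∈ weightedDegreeLE R w b) (hc : a + b ≤ c) : p * q ∈ weightedDegreeLE R w c := by
  refine restrictSupport_mono R ?_ ((restrictSupport_add R _ _).ge (Submodule.mul_mem_mul hp hq))
  rintro _ ⟨m, hm, m', hm', rfl⟩
  simp only [Set.mem_ofPred_eq, map_add, Nat.cast_add] at hm hm' ⊢
  omega

theorem X_mem_weightedDegreeLE (i : σ) : (X i : MvPolynomial σ R) ∈ weightedDegreeLE R w (w i) := by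
  simp [weightedDegreeLE, X, Finsupp.weight_single]

theorem one_mem_weightedDegreeLE_zero : (1 : MvPolynomial σ R) ∈ weightedDegreeLE R w 0 := by
  rw [one_def, weightedDegreeLE, monomial_mem_restrictSupport]
  simp

end MvPolynomial

namespace Matrix

variable {R : Type*} [CommRing R] (A B : Matrix (Fin 2) (Fin 2) R)

theorem adjugate_fin_two_eq_trace_smul_one_sub : adjugate A = trace A • 1 - A := by
  ext i j
  fin_cases i <;> fin_cases j <;> simp [adjugate_fin_two, trace_fin_two]

theorem mul_self_fin_two : A * A = trace A • A - det A • 1 := by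
  rw [← mul_adjugate, adjugate_fin_two_eq_trace_smul_one_sub, mul_sub, mul_smul_comm, mul_one,
    sub_sub_cancel]

theorem mul_add_mul_comm_fin_two :
    A * B + B * A = trace A • B + trace B • A + (trace (A * B) - trace A * trace B) • 1 := by
  ext i j
  fin_cases i <;> fin_cases j <;> simp [mul_apply, trace_fin_two, Fin.sum_univ_two] <;> ring

theorem mul_mul_mul_self_fin_two (hB : det B = 1) :
    B * (A * B) = A + trace (A * B) • B - trace A • 1 := by
  have hBB := mul_self_fin_two B
  rw [hB, one_smul] at hBB
  have hBA : B * A = trace A • B + trace B • A + (trace (A * B) - trace A * trace B) • 1 - A * B :=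
    eq_sub_of_add_eq' (mul_add_mul_comm_fin_two A B)
  rw [← mul_assoc, hBA]
  simp only [sub_mul, add_mul, smul_mul_assoc, one_mul, mul_assoc, hBB, mul_sub, mul_smul_comm,
    mul_one]
  module

end Matrix

def frickeCoords {R : Type*} [CommRing R] (A B : Matrix (Fin 2) (Fin 2) R) : Fin 3 → R :=
  ![trace A, trace B, trace (A * B)]

noncomputable abbrev xzDegreeLE (n : ℤ) : Submodule ℤ (MvPolynomial (Fin 3) ℤ) :=
  weightedDegreeLE ℤ ![1, 0, 1] n

theorem mem_xzDegreeLE_iff {n : ℤ} {p : MvPolynomial (Fin 3) ℤ} :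
    p ∈ xzDegreeLE n ↔ ∀ m ∈ p.support, (m 0 + m 2 : ℤ) ≤ n := by
  simp [mem_weightedDegreeLE_iff, Finsupp.weight_apply, Finsupp.sum_fintype, Fin.sum_univ_three]

theorem X_zero_mem_xzDegreeLE : (X 0 : MvPolynomial (Fin 3) ℤ) ∈ xzDegreeLE 1 :=
  X_mem_weightedDegreeLE 0

theorem X_one_mem_xzDegreeLE : (X 1 : MvPolynomial (Fin 3) ℤ) ∈ xzDegreeLE 0 :=
  X_mem_weightedDegreeLE 1

theorem X_two_mem_xzDegreeLE : (X 2 : MvPolynomial (Fin 3) ℤ) ∈ xzDegreeLE 1 :=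
  X_mem_weightedDegreeLE 2

/-- The coefficients of `one • 1 + a • A + b • B + ab • (A * B)`, as polynomials in the
variables `X 0, X 1, X 2` standing for `tr A, tr B, tr AB`. -/
structure FrickeForm where
  one : MvPolynomial (Fin 3) ℤ
  a : MvPolynomial (Fin 3) ℤ
  b : MvPolynomial (Fin 3) ℤ
  ab : MvPolynomial (Fin 3) ℤ

namespace FrickeForm

noncomputable instance : One FrickeForm := ⟨⟨1, 0, 0, 0⟩⟩

noncomputable def mulA (F : FrickeForm) : FrickeForm where
  one := -F.a
  a := F.one + X 0 * F.a
  b := -F.ab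
  ab := F.b + X 0 * F.ab

noncomputable def mulB (F : FrickeForm) : FrickeForm where
  one := (X 2 - X 0 * X 1) * F.a - F.b - X 0 * F.ab
  a := X 1 * F.a + F.ab
  b := F.one + X 0 * F.a + X 1 * F.b + X 2 * F.ab
  ab := -F.a

protected noncomputable def trace (F : FrickeForm) : MvPolynomial (Fin 3) ℤ :=
  2 * F.one + X 0 * F.a + X 1 * F.b + X 2 * F.ab

section Eval

variable {R : Type*} [CommRing R] (F : FrickeForm) (A B : Matrix (Fin 2) (Fin 2) R)

noncomputable def eval : Matrix (Fin 2) (Fin 2) R :=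
  aeval (frickeCoords A B) F.one • 1 + aeval (frickeCoords A B) F.a • A +
    aeval (frickeCoords A B) F.b • B + aeval (frickeCoords A B) F.ab • (A * B)

@[simp]
theorem eval_one : (1 : FrickeForm).eval A B = 1 := by
  simp [eval, show (1 : FrickeForm) = ⟨1, 0, 0, 0⟩ from rfl]

theorem eval_mulA (hA : det A = 1) : F.mulA.eval A B = A * F.eval A B := by
  have hAA := mul_self_fin_two A
  rw [hA, one_smul] at hAA
  simp only [eval, mulA, frickeCoords, map_add, map_neg, map_mul, aeval_X, cons_val_zero, mul_add,
    mul_smul_comm, mul_one, ← mul_assoc, hAA, sub_mul, smul_mul_assoc, one_mul]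
  module

theorem eval_mulB (hB : det B = 1) : F.mulB.eval A B = B * F.eval A B := by
  have hBB := mul_self_fin_two B
  rw [hB, one_smul] at hBB
  have hBA : B * A = trace A • B + trace B • A + (trace (A * B) - trace A * trace B) • 1 - A * B :=
    eq_sub_of_add_eq' (mul_add_mul_comm_fin_two A B)
  simp only [eval, mulB, frickeCoords, map_add, map_sub, map_neg, map_mul, aeval_X, cons_val_zero,
    cons_val_one, cons_val, mul_add, mul_smul_comm, mul_one, hBB, hBA,
    mul_mul_mul_self_fin_two A B hB]
  module

theorem eval_iterate_mulA (hA : det A = 1) (k : ℕ) :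
    (mulA^[k] F).eval A B = A ^ k * F.eval A B := by
  induction k with
  | zero => simp
  | succ k ih => rw [Function.iterate_succ_apply', eval_mulA _ _ _ hA, ih, pow_succ', mul_assoc]

theorem eval_iterate_mulB (hB : det B = 1) (k : ℕ) :
    (mulB^[k] F).eval A B = B ^ k * F.eval A B := by
  induction k with
  | zero => simp
  | succ k ih => rw [Function.iterate_succ_apply', eval_mulB _ _ _ hB, ih, pow_succ', mul_assoc]

theorem trace_eval : trace (F.eval A B) = aeval (frickeCoords A B) F.trace := by
  simp only [eval, FrickeForm.trace, frickeCoords, trace_add, trace_smul, trace_one,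
    Fintype.card_fin, smul_eq_mul, map_add, map_mul, aeval_X, aeval_ofNat, cons_val_zero,
    cons_val_one, cons_val]
  ring

end Eval

section Degree

/-- Giving `A` and `AB` weight one makes left multiplication by `A` raise the bound by one and
left multiplication by `B` preserve it. -/
def IsBounded (n : ℤ) (F : FrickeForm) : Prop :=
  F.one ∈ xzDegreeLE n ∧ F.a ∈ xzDegreeLE (n - 1) ∧ F.b ∈ xzDegreeLE n ∧ F.ab ∈ xzDegreeLE (n - 1)

theorem isBounded_one : IsBounded 0 1 :=
  ⟨one_mem_weightedDegreeLE_zero, zero_mem _, zero_mem _, zero_mem _⟩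

variable {F : FrickeForm} {n : ℤ}

theorem IsBounded.mulA (hF : F.IsBounded n) : F.mulA.IsBounded (n + 1) := by
  obtain ⟨h1, ha, hb, hab⟩ := hF
  refine ⟨neg_mem (weightedDegreeLE_mono (by omega) ha), add_mem ?_ ?_,
    neg_mem (weightedDegreeLE_mono (by omega) hab), add_mem ?_ ?_⟩
  · exact weightedDegreeLE_mono (by omega) h1
  · exact mul_mem_weightedDegreeLE X_zero_mem_xzDegreeLE ha (by omega)
  · exact weightedDegreeLE_mono (by omega) hb
  · exact mul_mem_weightedDegreeLE X_zero_mem_xzDegreeLE hab (by omega)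

theorem IsBounded.mulB (hF : F.IsBounded n) : F.mulB.IsBounded n := by
  obtain ⟨h1, ha, hb, hab⟩ := hF
  have hxy : (X 0 * X 1 : MvPolynomial (Fin 3) ℤ) ∈ xzDegreeLE 1 :=
    mul_mem_weightedDegreeLE X_zero_mem_xzDegreeLE X_one_mem_xzDegreeLE le_rfl
  refine ⟨sub_mem (sub_mem ?_ hb) ?_, add_mem ?_ hab, add_mem (add_mem (add_mem h1 ?_) ?_) ?_,
    neg_mem ha⟩
  · exact mul_mem_weightedDegreeLE (sub_mem X_two_mem_xzDegreeLE hxy) ha (by omega)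
  · exact mul_mem_weightedDegreeLE X_zero_mem_xzDegreeLE hab (by omega)
  · exact mul_mem_weightedDegreeLE X_one_mem_xzDegreeLE ha (by omega)
  · exact mul_mem_weightedDegreeLE X_zero_mem_xzDegreeLE ha (by omega)
  · exact mul_mem_weightedDegreeLE X_one_mem_xzDegreeLE hb (by omega)
  · exact mul_mem_weightedDegreeLE X_two_mem_xzDegreeLE hab (by omega)

theorem IsBounded.iterate_mulA (hF : F.IsBounded n) (k : ℕ) :
    (FrickeForm.mulA^[k] F).IsBounded (n + k) := by
  induction k with
  | zero => simpa using hF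
  | succ k ih =>
    rw [Function.iterate_succ_apply', Nat.cast_succ, ← add_assoc]
    exact ih.mulA

theorem IsBounded.iterate_mulB (hF : F.IsBounded n) (k : ℕ) :
    (FrickeForm.mulB^[k] F).IsBounded n := by
  induction k with
  | zero => exact hF
  | succ k ih =>
    rw [Function.iterate_succ_apply']
    exact ih.mulB

theorem IsBounded.trace_mem (hF : F.IsBounded n) : F.trace ∈ xzDegreeLE n := by
  obtain ⟨h1, ha, hb, hab⟩ := hF
  refine add_mem (add_mem (add_mem ?_ ?_) ?_) ?_
  · rw [two_mul]
    exact add_mem h1 h1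
  · exact mul_mem_weightedDegreeLE X_zero_mem_xzDegreeLE ha (by omega)
  · exact mul_mem_weightedDegreeLE X_one_mem_xzDegreeLE hb (by omega)
  · exact mul_mem_weightedDegreeLE X_two_mem_xzDegreeLE hab (by omega)

end Degree

open scoped MatrixGroups in
theorem exists_isBounded_eval_eq_prod_ofFn {R : Type*} [CommRing R] (t : ℕ) (α β : Fin t → ℕ) :
    ∃ F : FrickeForm, F.IsBounded (∑ i, α i) ∧ ∀ A B : SL(2, R),
      F.eval A B = ((List.ofFn fun i => A ^ α i * B ^ β i).prod : Matrix (Fin 2) (Fin 2) R) := by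
  induction t with
  | zero => exact ⟨1, by simpa using isBounded_one, fun A B => by simp⟩
  | succ t ih =>
    obtain ⟨F, hF, hF_eval⟩ := ih (fun i => α i.succ) (fun i => β i.succ)
    refine ⟨mulA^[α 0] (mulB^[β 0] F), ?_, fun A B => ?_⟩
    · rw [Fin.sum_univ_succ, add_comm]
      exact (hF.iterate_mulB _).iterate_mulA _
    · rw [eval_iterate_mulA _ _ _ A.det_coe, eval_iterate_mulB _ _ _ B.det_coe, hF_eval,
        List.ofFn_succ, List.prod_cons]
      simp only [mul_assoc, Matrix.SpecialLinearGroup.coe_mul, Matrix.SpecialLinearGroup.coe_pow]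

end FrickeForm

theorem fricke_polynomial_xz_degree_general (t : ℕ) (α β : Fin t → ℕ) :
    ∃ P : MvPolynomial (Fin 3) ℤ,
      (∀ mono ∈ P.support, mono 0 + mono 2 ≤ ∑ i, α i) ∧
      ∀ A B : Matrix.SpecialLinearGroup (Fin 2) ℂ,
        Matrix.trace (((List.ofFn fun i => A ^ α i * B ^ β i).prod :
            Matrix.SpecialLinearGroup (Fin 2) ℂ) : Matrix (Fin 2) (Fin 2) ℂ) =
          MvPolynomial.aeval
            ![Matrix.trace ((A : Matrix (Fin 2) (Fin 2) ℂ)),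
              Matrix.trace ((B : Matrix (Fin 2) (Fin 2) ℂ)),
              Matrix.trace (((A * B : Matrix.SpecialLinearGroup (Fin 2) ℂ) :
                Matrix (Fin 2) (Fin 2) ℂ))] P := by
  obtain ⟨F, hF, hF_eval⟩ := FrickeForm.exists_isBounded_eval_eq_prod_ofFn (R := ℂ) t α β
  refine ⟨F.trace, fun m hm => ?_, fun A B => ?_⟩
  · exact_mod_cast mem_xzDegreeLE_iff.mp hF.trace_mem m hm
  · rw [← hF_eval, FrickeForm.trace_eval, Matrix.SpecialLinearGroup.coe_mul]
    rfl

/-- **Fricke polynomials; Lemma 3.8 of the paper.** For a monotone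
word `w(A,B) = A^{α₁}B^{β₁}⋯A^{α_t}B^{β_t}` with all `αᵢ, βᵢ > 0` and
`a = Σᵢ αᵢ`, there is a polynomial `P ∈ ℤ[x,y,z]` of `(x,z)`-degree at most `a`
such that `trace (w(A,B)) = P(trace A, trace B, trace AB)` for all
`A, B ∈ SL₂(ℂ)`. -/
theorem fricke_polynomial_xz_degree (t : ℕ) (ht : 0 < t) (α β : Fin t → ℕ)
    (hα : ∀ i, 0 < α i) (hβ : ∀ i, 0 < β i) :
    ∃ P : MvPolynomial (Fin 3) ℤ,
      (∀ mono ∈ P.support, mono 0 + mono 2 ≤ ∑ i, α i) ∧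
      ∀ A B : Matrix.SpecialLinearGroup (Fin 2) ℂ,
        Matrix.trace (((List.ofFn fun i => A ^ α i * B ^ β i).prod :
            Matrix.SpecialLinearGroup (Fin 2) ℂ) : Matrix (Fin 2) (Fin 2) ℂ) =
          MvPolynomial.aeval
            ![Matrix.trace ((A : Matrix (Fin 2) (Fin 2) ℂ)),
              Matrix.trace ((B : Matrix (Fin 2) (Fin 2) ℂ)),
              Matrix.trace (((A * B : Matrix.SpecialLinearGroup (Fin 2) ℂ) :
                Matrix (Fin 2) (Fin 2) ℂ))] P :=
  fricke_polynomial_xz_degree_general t α β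
end
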